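/- arXiv:0805.2016 — 4 statements merged into one kernel-verified Lean document; each statement's English description precedes it below -/
import Mathlib

section
/- Let z₁,…,zₙ be complex numbers on the unit circle and P(z) = ∏ᵢ (z − zᵢ). If z lies on the unit circle, z ≠ zᵢ for all i, and Im(e^{−iθ}·P(z)) = 0 for a real number θ, then z^n = e^{i(2θ − Σᵢ arg(zᵢ))}·(−1)^n, i.e., writing z = e^{iφ}, one has n·φ ≡ 2θ − Σᵢ arg(zᵢ) + nπ (mod 2π). -/
/-!
For `‖w‖ = ‖u‖ = 1` we have `conj (w - u) = -(w - u) / (w u)`, hence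
`conj P(w) = (-1)^n P(w) / (w^n ∏ zᵢ)`. Reality of `e^{-iθ} P(w)` says instead
`conj P(w) = e^{-2iθ} P(w)`. Cancelling `P(w) ≠ 0` gives `w^n ∏ zᵢ = e^{2iθ} (-1)^n`,
and `∏ zᵢ = e^{i Σ arg zᵢ}`.
-/

open Complex Finset ComplexConjugate

theorem conj_sub_eq_of_norm_eq_one {w u : ℂ} (hw : ‖w‖ = 1) (hu : ‖u‖ = 1) :
    conj (w - u) = -(w - u) / (w * u) := by
  have hw0 : w ≠ 0 := norm_ne_zero_iff.1 (by simp [hw])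
  have hu0 : u ≠ 0 := norm_ne_zero_iff.1 (by simp [hu])
  rw [map_sub, ← inv_eq_conj hw, ← inv_eq_conj hu]
  field_simp
  ring

theorem conj_prod_sub_eq_of_norm_eq_one {ι : Type*} (s : Finset ι) (z : ι → ℂ)
    (hz : ∀ i ∈ s, ‖z i‖ = 1) {w : ℂ} (hw : ‖w‖ = 1) :
    conj (∏ i ∈ s, (w - z i)) = (-1) ^ #s * (∏ i ∈ s, (w - z i)) / (w ^ #s * ∏ i ∈ s, z i) := by
  rw [map_prod, prod_congr rfl fun i hi => conj_sub_eq_of_norm_eq_one hw (hz i hi),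
    prod_div_distrib, prod_mul_distrib, prod_const, prod_neg]

theorem prod_eq_exp_sum_arg {ι : Type*} (s : Finset ι) (z : ι → ℂ) (hz : ∀ i ∈ s, ‖z i‖ = 1) :
    ∏ i ∈ s, z i = exp ((∑ i ∈ s, arg (z i) : ℝ) * I) := by
  rw [ofReal_sum, sum_mul, exp_sum]
  refine prod_congr rfl fun i hi => ?_
  simpa [hz i hi] using (norm_mul_exp_arg_mul_I (z i)).symm

theorem conj_eq_exp_mul_of_im_exp_mul_eq_zero {θ : ℝ} {p : ℂ}
    (h : (exp (-θ * I) * p).im = 0) : conj p = exp (-(2 * θ) * I) * p := by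
  have hreal := conj_eq_iff_im.2 h
  rw [map_mul, ← exp_conj] at hreal
  simp only [map_mul, map_neg, conj_ofReal, conj_I, neg_mul_neg] at hreal
  calc conj p = exp (-θ * I) * (exp (θ * I) * conj p) := by
        rw [← mul_assoc, ← exp_add]; ring_nf; simp
    _ = exp (-(2 * θ) * I) * p := by rw [hreal, ← mul_assoc, ← exp_add]; ring_nf

theorem pow_eq_of_im_eq_zero (n : ℕ) (z : Fin n → ℂ) (hz : ∀ i, ‖z i‖ = 1)
    (θ : ℝ) (w : ℂ) (hw : ‖w‖ = 1) (hne : ∀ i, w ≠ z i)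
    (him : (Complex.exp (-θ * Complex.I) * ∏ i, (w - z i)).im = 0) :
    w ^ n = Complex.exp (((2 * θ - ∑ i, Complex.arg (z i)) : ℝ) * Complex.I) * (-1) ^ n := by
  have hP : ∏ i, (w - z i) ≠ 0 := prod_ne_zero_iff.2 fun i _ => sub_ne_zero.2 (hne i)
  have hconj := conj_prod_sub_eq_of_norm_eq_one univ z (fun i _ => hz i) hw
  rw [conj_eq_exp_mul_of_im_exp_mul_eq_zero him, card_univ, Fintype.card_fin,
    prod_eq_exp_sum_arg univ z (fun i _ => hz i),
    eq_div_iff (by simp [← norm_ne_zero_iff, hw])] at hconj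
  have key : exp (-(2 * θ) * I) * w ^ n * exp ((∑ i, arg (z i) : ℝ) * I) = (-1) ^ n :=
    mul_left_cancel₀ hP (by linear_combination hconj)
  have hexp : exp ((2 * θ - ∑ i, arg (z i) : ℝ) * I) * exp (-(2 * θ) * I) *
      exp ((∑ i, arg (z i) : ℝ) * I) = 1 := by
    rw [← exp_add, ← exp_add, ← exp_zero]; push_cast; ring_nf
  linear_combination -w ^ n * hexp + exp ((2 * θ - ∑ i, arg (z i) : ℝ) * I) * key
end

section
/- Let z₁,…,zₙ lie on the unit circle, P(z) = ∏ᵢ (z − zᵢ), θ ∈ ℝ, and set Ω = (2θ − Σᵢ arg(zᵢ))/n − π. If z = e^{i(Ω + 2kπ/n)} for some integer k and z ≠ zᵢ for all i, then Im(e^{−iθ}·P(z)) = 0. -/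
/-!
Write `w = e^{iφ}` and `zⱼ = e^{iαⱼ}`. By the half-angle identity every factor
`w - zⱼ = e^{i((φ + αⱼ)/2 + π/2)} · 2 sin((φ - αⱼ)/2)` is a unit times a real number, so
`P(w)` is `e^{iΣⱼ((φ + αⱼ)/2 + π/2)}` times a real number. The choice of `Ω` makes that angle
equal to `θ + kπ`, hence `e^{-iθ} P(w) = ± (real number)`.
-/

namespace Complex

theorem exp_mul_I_sub_exp_mul_I (a b : ℝ) :
    exp (a * I) - exp (b * I) =
      exp (↑((a + b) / 2 + Real.pi / 2) * I) * ↑(2 * Real.sin ((a - b) / 2)) := by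
  have ha : exp (a * I) = exp (↑((a + b) / 2) * I) * exp (↑((a - b) / 2) * I) := by
    rw [← exp_add]; congr 1; push_cast; ring
  have hb : exp (b * I) = exp (↑((a + b) / 2) * I) * exp (-↑((a - b) / 2) * I) := by
    rw [← exp_add]; congr 1; push_cast; ring
  have hI : exp (↑(Real.pi / 2) * I) = I := by push_cast; exact exp_pi_div_two_mul_I
  rw [ofReal_add, add_mul, exp_add, hI, ofReal_mul, ofReal_ofNat, ofReal_sin, sin, ha, hb]
  linear_combination exp (↑((a + b) / 2) * I) *
    (exp (↑((a - b) / 2) * I) - exp (-↑((a - b) / 2) * I)) * I_mul_I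

theorem prod_exp_mul_I_sub_exp_mul_I {ι : Type*} (s : Finset ι) (φ : ℝ) (α : ι → ℝ) :
    ∏ i ∈ s, (exp (φ * I) - exp (α i * I)) =
      exp (↑(∑ i ∈ s, ((φ + α i) / 2 + Real.pi / 2)) * I) *
        ↑(∏ i ∈ s, 2 * Real.sin ((φ - α i) / 2)) := by
  rw [Finset.prod_congr rfl fun i _ => exp_mul_I_sub_exp_mul_I φ (α i), Finset.prod_mul_distrib,
    ofReal_sum, Finset.sum_mul, exp_sum, ofReal_prod]

theorem im_exp_int_mul_pi_mul_I_mul_ofReal (k : ℤ) (r : ℝ) :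
    (exp (↑(k * Real.pi) * I) * r).im = 0 := by
  rw [mul_im, exp_ofReal_mul_I_im, Real.sin_int_mul_pi, ofReal_im]
  simp

end Complex

open Complex

theorem im_eq_zero_of_ngon_general (n : ℕ) (hn : 1 ≤ n) (z : Fin n → ℂ)
    (hz : ∀ i, ‖z i‖ = 1) (θ : ℝ)
    (Ω : ℝ) (hΩ : Ω = (2 * θ - ∑ i, Complex.arg (z i)) / n - Real.pi)
    (k : ℤ) (w : ℂ) (hw : w = Complex.exp (((Ω + 2 * k * Real.pi / n) : ℝ) * Complex.I)) :
    (Complex.exp (-θ * Complex.I) * ∏ i, (w - z i)).im = 0 := by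
  set φ := Ω + 2 * k * Real.pi / n
  have hz_exp (i : Fin n) : z i = exp (arg (z i) * I) := by
    simpa [hz i] using (norm_mul_exp_arg_mul_I (z i)).symm
  have hangle : -θ + ∑ i, ((φ + arg (z i)) / 2 + Real.pi / 2) = k * Real.pi := by
    have hn0 : (n : ℝ) ≠ 0 := Nat.cast_ne_zero.mpr (Nat.one_le_iff_ne_zero.mp hn)
    simp only [Finset.sum_add_distrib, ← Finset.sum_div, Finset.sum_const, Finset.card_univ,
      Fintype.card_fin, nsmul_eq_mul, φ, hΩ]
    field_simp
    ring
  have hprod : ∏ i, (w - z i) = ∏ i, (exp (φ * I) - exp (arg (z i) * I)) := by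
    rw [hw]; exact Finset.prod_congr rfl fun i _ => by rw [← hz_exp]
  rw [hprod, prod_exp_mul_I_sub_exp_mul_I, ← mul_assoc, ← exp_add, ← add_mul, ← ofReal_neg,
    ← ofReal_add, hangle]
  exact im_exp_int_mul_pi_mul_I_mul_ofReal k _

theorem im_eq_zero_of_ngon (n : ℕ) (hn : 1 ≤ n) (z : Fin n → ℂ)
    (hz : ∀ i, ‖z i‖ = 1) (θ : ℝ)
    (Ω : ℝ) (hΩ : Ω = (2 * θ - ∑ i, Complex.arg (z i)) / n - Real.pi)
    (k : ℤ) (w : ℂ) (hw : w = Complex.exp (((Ω + 2 * k * Real.pi / n) : ℝ) * Complex.I))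
    (hne : ∀ i, w ≠ z i) :
    (Complex.exp (-θ * Complex.I) * ∏ i, (w - z i)).im = 0 :=
  im_eq_zero_of_ngon_general n hn z hz θ Ω hΩ k w hw
end

section
/- Let z₁,…,zₙ (n ≥ 1) be points on the unit circle, P(z) = ∏ᵢ (z − zᵢ), θ ∈ ℝ, and Ω = (2θ − Σᵢ arg(zᵢ))/n − π. Then {z : |z| = 1 ∧ Im(e^{−iθ}P(z)) = 0} = {z₁,…,zₙ} ∪ {e^{i(Ω + 2kπ/n)} : k = 1,…,n}. -/
/-!
For `‖w‖ = ‖zᵢ‖ = 1` one has `conj (w - zᵢ) = -(w - zᵢ) / (w zᵢ)`, so `P(w)` satisfies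
`conj P(w) = (-1)ⁿ / (wⁿ ∏ zᵢ) · P(w)`. Hence `e^{-iθ} P(w)` is real iff `P(w) = 0` or
`wⁿ = (-1)ⁿ e^{2iθ} / ∏ zᵢ = e^{inΩ}`, and the solutions of the latter are the `n` points
`e^{i(Ω + 2kπ/n)}`.
-/

open Complex ComplexConjugate Finset

lemma IsPrimitiveRoot.pow_eq_one_iff_exists_pow {R : Type*} [CommRing R] [IsDomain R]
    {ζ x : R} {n : ℕ} (hζ : IsPrimitiveRoot ζ n) (hn : n ≠ 0) :
    x ^ n = 1 ↔ ∃ k, 1 ≤ k ∧ k ≤ n ∧ ζ ^ k = x := by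
  constructor
  · intro hx
    have : NeZero n := ⟨hn⟩
    obtain ⟨m, hmn, rfl⟩ := hζ.eq_pow_of_pow_eq_one hx
    rcases Nat.eq_zero_or_pos m with rfl | hm
    · exact ⟨n, by omega, le_rfl, by rw [hζ.pow_eq_one, pow_zero]⟩
    · exact ⟨m, hm, hmn.le, rfl⟩
  · rintro ⟨k, -, -, rfl⟩
    rw [← pow_mul, mul_comm, pow_mul, hζ.pow_eq_one, one_pow]

namespace Complex

lemma pow_eq_exp_mul_I_iff {n : ℕ} (hn : n ≠ 0) (Ω : ℝ) (w : ℂ) :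
    w ^ n = exp (n * Ω * I) ↔
      ∃ k : ℕ, 1 ≤ k ∧ k ≤ n ∧ w = exp (↑(Ω + 2 * k * Real.pi / n) * I) := by
  have hexp (k : ℕ) :
      exp (↑(Ω + 2 * k * Real.pi / n) * I) = exp (2 * Real.pi * I / n) ^ k * exp (Ω * I) := by
    rw [← exp_nat_mul, ← exp_add]
    push_cast
    ring_nf
  simp only [hexp, eq_comm (a := w), ← eq_div_iff (exp_ne_zero _)]
  rw [← (isPrimitiveRoot_exp n hn).pow_eq_one_iff_exists_pow hn, div_pow, ← exp_nat_mul,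
    div_eq_one_iff_eq (exp_ne_zero _), mul_assoc]

lemma conj_sub_of_norm_eq_one {w u : ℂ} (hw : ‖w‖ = 1) (hu : ‖u‖ = 1) :
    conj (w - u) = -1 / (w * u) * (w - u) := by
  have hw0 : w ≠ 0 := ne_zero_of_norm_ne_zero <| hw ▸ one_ne_zero
  have hu0 : u ≠ 0 := ne_zero_of_norm_ne_zero <| hu ▸ one_ne_zero
  rw [map_sub, ← inv_eq_conj hw, ← inv_eq_conj hu]
  field_simp
  ring

section UnitCircle

variable {ι : Type*} [Fintype ι] {z : ι → ℂ}

lemma conj_prod_sub_of_norm_eq_one {w : ℂ} (hw : ‖w‖ = 1) (hz : ∀ i, ‖z i‖ = 1) :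
    conj (∏ i, (w - z i)) =
      (-1) ^ Fintype.card ι / (w ^ Fintype.card ι * ∏ i, z i) * ∏ i, (w - z i) := by
  simp [conj_sub_of_norm_eq_one hw (hz _), prod_mul_distrib, prod_div_distrib]

lemma im_mul_eq_zero_iff_of_conj_eq {u p s : ℂ} (hu : ‖u‖ = 1) (hp : conj p = s * p) :
    (u * p).im = 0 ↔ p = 0 ∨ s = u ^ 2 := by
  have hu0 : u ≠ 0 := ne_zero_of_norm_ne_zero <| hu ▸ one_ne_zero
  rw [← conj_eq_iff_im, map_mul, hp, ← inv_eq_conj hu, inv_mul_eq_iff_eq_mul₀ hu0, ← sub_eq_zero,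
    ← sub_eq_zero (a := s), ← mul_eq_zero]
  constructor <;> intro h <;> linear_combination h

lemma prod_eq_exp_sum_arg_mul_I (hz : ∀ i, ‖z i‖ = 1) :
    ∏ i, z i = exp ((∑ i, arg (z i) : ℝ) * I) := by
  push_cast
  rw [sum_mul, exp_sum]
  refine prod_congr rfl fun i _ => ?_
  simpa [hz i] using (norm_mul_exp_arg_mul_I (z i)).symm

lemma im_mul_prod_sub_eq_zero_iff {u w : ℂ} (hu : ‖u‖ = 1) (hw : ‖w‖ = 1)
    (hz : ∀ i, ‖z i‖ = 1) :
    (u * ∏ i, (w - z i)).im = 0 ↔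
      w ∈ Set.range z ∨ w ^ Fintype.card ι = (-1) ^ Fintype.card ι / ((∏ i, z i) * u ^ 2) := by
  have hw0 : w ≠ 0 := ne_zero_of_norm_ne_zero <| hw ▸ one_ne_zero
  have hu0 : u ≠ 0 := ne_zero_of_norm_ne_zero <| hu ▸ one_ne_zero
  have hz0 : ∏ i, z i ≠ 0 :=
    prod_ne_zero_iff.mpr fun i _ => ne_zero_of_norm_ne_zero <| (hz i) ▸ one_ne_zero
  rw [im_mul_eq_zero_iff_of_conj_eq hu (conj_prod_sub_of_norm_eq_one hw hz), prod_eq_zero_iff,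
    div_eq_iff (by positivity), eq_div_iff (by positivity)]
  simp only [mem_univ, true_and, sub_eq_zero, Set.mem_range, eq_comm (a := w)]
  rw [eq_comm (a := (-1 : ℂ) ^ _), mul_comm (u ^ 2), mul_assoc]

end UnitCircle

end Complex

theorem curve_inter_circle (n : ℕ) (hn : 1 ≤ n) (z : Fin n → ℂ)
    (hz : ∀ i, ‖z i‖ = 1) (θ : ℝ)
    (Ω : ℝ) (hΩ : Ω = (2 * θ - ∑ i, Complex.arg (z i)) / n - Real.pi) :
    {w : ℂ | ‖w‖ = 1 ∧ (Complex.exp (-θ * Complex.I) * ∏ i, (w - z i)).im = 0} =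
      Set.range z ∪
        {w : ℂ | ∃ k : ℕ, 1 ≤ k ∧ k ≤ n ∧
          w = Complex.exp (((Ω + 2 * k * Real.pi / n) : ℝ) * Complex.I)} := by
  have hn0 : n ≠ 0 := by omega
  have hc : (-1) ^ n / ((∏ i, z i) * exp (-θ * I) ^ 2) = exp (n * Ω * I) := by
    rw [prod_eq_exp_sum_arg_mul_I hz, ← exp_neg_pi_mul_I, ← exp_nat_mul, ← exp_nat_mul,
      ← exp_add, ← exp_sub, hΩ]
    congr 1
    push_cast
    field_simp
    ring
  have hu : ‖exp (-θ * I)‖ = 1 := by simpa using norm_exp_ofReal_mul_I (-θ)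
  have key {w : ℂ} (hw : ‖w‖ = 1) :
      (exp (-θ * I) * ∏ i, (w - z i)).im = 0 ↔ w ∈ Set.range z ∨ w ^ n = exp (n * Ω * I) := by
    rw [im_mul_prod_sub_eq_zero_iff hu hw hz, Fintype.card_fin, hc]
  ext w
  rw [Set.mem_union, Set.mem_ofPred_eq, Set.mem_ofPred_eq]
  have hnorm : w ∈ Set.range z ∨ (∃ k : ℕ, 1 ≤ k ∧ k ≤ n ∧
      w = exp (((Ω + 2 * k * Real.pi / n) : ℝ) * I)) → ‖w‖ = 1 := by
    rintro (⟨i, rfl⟩ | ⟨k, -, -, rfl⟩)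
    exacts [hz i, norm_exp_ofReal_mul_I _]
  rw [← pow_eq_exp_mul_I_iff hn0] at hnorm ⊢
  exact ⟨fun ⟨hw, him⟩ => (key hw).1 him, fun h => ⟨hnorm h, (key (hnorm h)).2 h⟩⟩
end

section
/- Let z₁,…,zₙ (n ≥ 1) be points on the unit circle, P(z) = ∏ᵢ (z − zᵢ), θ ∈ ℝ, and Ω = (2θ − Σᵢ arg(zᵢ))/n − π. If z is on the unit circle, z ∉ {z₁,…,zₙ}, and Im(e^{−iθ}P(z)) = 0, then multiplying z by a primitive n-th root of unity ζ = e^{2πi/n} yields a point ζz that, if it is also not a root of P, again satisfies Im(e^{−iθ}P(ζz)) = 0. -/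
/-!
For `u` and `a` on the unit circle, `conj (u - a) * (u * a) = -(u - a)`. Multiplying over the
roots, `conj (P u) * u ^ n * ∏ zᵢ = (-1) ^ n * P u` for `‖u‖ = 1`, so when `P u ≠ 0` the condition
`Im (E * P u) = 0` is equivalent to `conj E * (-1) ^ n = E * u ^ n * ∏ zᵢ`. The latter depends on
`u` only through `u ^ n`, which does not change under `u ↦ ζ u`.
-/

open Complex ComplexConjugate

theorem Complex.conj_sub_mul_mul_eq_neg_sub {u a : ℂ} (hu : ‖u‖ = 1) (ha : ‖a‖ = 1) :
    conj (u - a) * (u * a) = -(u - a) := by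
  have hu0 : u ≠ 0 := norm_ne_zero_iff.mp (by simp [hu])
  have ha0 : a ≠ 0 := norm_ne_zero_iff.mp (by simp [ha])
  rw [map_sub, ← inv_eq_conj hu, ← inv_eq_conj ha]
  field_simp
  ring

section UnitCircleRoots

variable {ι : Type*} [Fintype ι] {z : ι → ℂ} {u : ℂ}

theorem conj_prod_sub_mul_eq (hz : ∀ i, ‖z i‖ = 1) (hu : ‖u‖ = 1) :
    conj (∏ i, (u - z i)) * (u ^ Fintype.card ι * ∏ i, z i)
      = (-1) ^ Fintype.card ι * ∏ i, (u - z i) := by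
  calc conj (∏ i, (u - z i)) * (u ^ Fintype.card ι * ∏ i, z i)
      = ∏ i, (conj (u - z i) * (u * z i)) := by
        rw [map_prod, Finset.prod_mul_distrib, Finset.prod_mul_distrib, Finset.prod_const,
          Finset.card_univ]
    _ = ∏ i, (-1 * (u - z i)) := by
        simp only [conj_sub_mul_mul_eq_neg_sub hu (hz _), neg_one_mul]
    _ = (-1) ^ Fintype.card ι * ∏ i, (u - z i) := by
        rw [Finset.prod_mul_distrib, Finset.prod_const, Finset.card_univ]

theorem conj_mul_neg_one_pow_eq_of_im_mul_prod_sub_eq_zero {E : ℂ} (hz : ∀ i, ‖z i‖ = 1)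
    (hu : ‖u‖ = 1) (hne : ∀ i, u ≠ z i) (him : (E * ∏ i, (u - z i)).im = 0) :
    conj E * (-1) ^ Fintype.card ι = E * (u ^ Fintype.card ι * ∏ i, z i) := by
  have hP : ∏ i, (u - z i) ≠ 0 := Finset.prod_ne_zero_iff.mpr fun i _ => sub_ne_zero.mpr (hne i)
  have hreal : conj E * conj (∏ i, (u - z i)) = E * ∏ i, (u - z i) := by
    rw [← map_mul]
    exact conj_eq_iff_im.mpr him
  apply mul_right_cancel₀ hP
  linear_combination (u ^ Fintype.card ι * ∏ i, z i) * hreal - conj E * conj_prod_sub_mul_eq hz hu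

theorem im_mul_prod_sub_eq_zero_of_conj_mul_neg_one_pow_eq {E : ℂ} (hz : ∀ i, ‖z i‖ = 1)
    (hu : ‖u‖ = 1) (h : conj E * (-1) ^ Fintype.card ι = E * (u ^ Fintype.card ι * ∏ i, z i)) :
    (E * ∏ i, (u - z i)).im = 0 := by
  have hc : u ^ Fintype.card ι * ∏ i, z i ≠ 0 := by
    refine mul_ne_zero (pow_ne_zero _ ?_) (Finset.prod_ne_zero_iff.mpr fun i _ => ?_)
    · exact norm_ne_zero_iff.mp (by simp [hu])
    · exact norm_ne_zero_iff.mp (by simp [hz i])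
  rw [← conj_eq_iff_im, map_mul]
  apply mul_right_cancel₀ hc
  linear_combination conj E * conj_prod_sub_mul_eq hz hu + (∏ i, (u - z i)) * h

end UnitCircleRoots

theorem exp_two_pi_div_mul_I_pow_self (n : ℕ) : exp ((2 * Real.pi / n : ℝ) * I) ^ n = 1 := by
  rcases eq_or_ne n 0 with rfl | hn
  · exact pow_zero _
  rw [← exp_nat_mul, ← exp_two_pi_mul_I]
  congr 1
  push_cast
  field_simp

theorem rotation_invariance_general (n : ℕ) (z : Fin n → ℂ)
    (hz : ∀ i, ‖z i‖ = 1) (θ : ℝ)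
    (w : ℂ) (hw : ‖w‖ = 1) (hne : ∀ i, w ≠ z i)
    (him : (Complex.exp (-θ * Complex.I) * ∏ i, (w - z i)).im = 0)
    (ζ : ℂ) (hζ : ζ = Complex.exp ((2 * Real.pi / n : ℝ) * Complex.I)) :
    (Complex.exp (-θ * Complex.I) * ∏ i, (ζ * w - z i)).im = 0 := by
  subst hζ
  have hζw : ‖exp ((2 * Real.pi / n : ℝ) * I) * w‖ = 1 := by
    rw [norm_mul, hw, norm_exp_ofReal_mul_I, one_mul]
  refine im_mul_prod_sub_eq_zero_of_conj_mul_neg_one_pow_eq hz hζw ?_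
  rw [mul_pow, Fintype.card_fin, exp_two_pi_div_mul_I_pow_self, one_mul]
  simpa using conj_mul_neg_one_pow_eq_of_im_mul_prod_sub_eq_zero hz hw hne him

theorem rotation_invariance (n : ℕ) (hn : 1 ≤ n) (z : Fin n → ℂ)
    (hz : ∀ i, ‖z i‖ = 1) (θ : ℝ)
    (w : ℂ) (hw : ‖w‖ = 1) (hne : ∀ i, w ≠ z i)
    (him : (Complex.exp (-θ * Complex.I) * ∏ i, (w - z i)).im = 0)
    (ζ : ℂ) (hζ : ζ = Complex.exp ((2 * Real.pi / n : ℝ) * Complex.I))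
    (hne' : ∀ i, ζ * w ≠ z i) :
    (Complex.exp (-θ * Complex.I) * ∏ i, (ζ * w - z i)).im = 0 :=
  rotation_invariance_general n z hz θ w hw hne him ζ hζ
end
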